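/- For the 4×4 matrix A(z) = [[z,1,1,0],[0,z,0,1],[0,0,−z,1],[0,0,0,z]], one has A(z)⁻¹ = (1/z²)·[[z,−1,1,0],[0,z,0,−1],[0,0,−z,1],[0,0,0,z]] for z ≠ 0, so z = 0 is a pole of order exactly 2 of A(z)⁻¹, even though the length of the longest chain of classes of A(0) (all four singleton classes being basic) is 3. -/

import Mathlib

open Matrix Filter
open scoped Classical

/-- The spectral abscissa of a complex square matrix. -/
noncomputable def specAbsC {n : Type*} [Fintype n] [DecidableEq n]
    (A : Matrix n n ℂ) : ℝ :=
  sSup (Complex.re '' spectrum ℂ A)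

variable {N : ℕ}

/-- Access relation of the directed graph of nonzero off-diagonal entries. -/
def access (B : Matrix (Fin N) (Fin N) ℂ) : Fin N → Fin N → Prop :=
  Relation.ReflTransGen (fun i j => i ≠ j ∧ B i j ≠ 0)

/-- A class of `B` (strongly connected component of its directed graph). -/
def IsClass (B : Matrix (Fin N) (Fin N) ℂ) (γ : Set (Fin N)) : Prop :=
  ∃ m : Fin N, γ = {n' : Fin N | access B m n' ∧ access B n' m}

/-- Class `γ` has access to class `δ`. -/
def classAccess (B : Matrix (Fin N) (Fin N) ℂ) (γ δ : Set (Fin N)) : Prop :=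
  ∃ m ∈ γ, ∃ n' ∈ δ, access B m n'

/-- A chain of classes of `B`. -/
def IsClassChain (B : Matrix (Fin N) (Fin N) ℂ) (l : List (Set (Fin N))) : Prop :=
  (∀ γ ∈ l, IsClass B γ) ∧ l.Chain' (fun γ δ => classAccess B γ δ ∧ γ ≠ δ)

/-- The principal submatrix of `B` on the index set `γ`. -/
def subMat (B : Matrix (Fin N) (Fin N) ℂ) (γ : Set (Fin N)) : Matrix γ γ ℂ :=
  fun a b => B a.1 b.1

/-- A class `γ` of `B` is basic if `ζ(B_{γ,γ}) = ζ(B)`. -/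
def IsBasic (B : Matrix (Fin N) (Fin N) ℂ) (γ : Set (Fin N)) : Prop :=
  specAbsC (subMat B γ) = specAbsC B

/-- The length of a chain of classes: the number of basic classes it contains. -/
noncomputable def chainLen (B : Matrix (Fin N) (Fin N) ℂ) (l : List (Set (Fin N))) : ℕ :=
  l.countP (fun γ => decide (IsBasic B γ))

/-- The matrix-valued function `A(z) = [[z,1,1,0],[0,z,0,1],[0,0,−z,1],[0,0,0,z]]`. -/
noncomputable def Amat (z : ℂ) : Matrix (Fin 4) (Fin 4) ℂ :=
  !![z, 1, 1, 0; 0, z, 0, 1; 0, 0, -z, 1; 0, 0, 0, z]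

/-! Multiplying `Amat z` by the explicit matrix `Bmat z` gives `z ^ 2 • 1` identically in `z`, so
`z ^ 2 • (Amat z)⁻¹ = Bmat z` off `0`, and this tends to the nonzero matrix `Bmat 0`.
`Amat 0` is strictly upper triangular, so every edge of its graph increases the index: the classes
are singletons, all basic because both `Amat 0` and its `1 × 1` diagonal blocks have spectrum `{0}`,
and a chain of classes is an increasing path. The edges are `0 → 1, 0 → 2, 1 → 3, 2 → 3`; as `1`
does not reach `2`, no path visits all four vertices, while `0 → 1 → 3` has three. -/

section Spectrum

theorem Matrix.spectrum_eq_range_diag_of_isUpperTriangular {n K : Type*} [Fintype n]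
    [DecidableEq n] [LinearOrder n] [Field K] {M : Matrix n n K} (hM : M.IsUpperTriangular) :
    spectrum K M = Set.range M.diag := by
  ext r
  rw [Matrix.mem_spectrum_iff_isRoot_charpoly, M.charpoly_of_isUpperTriangular hM,
    Polynomial.isRoot_prod]
  simp [sub_eq_zero, eq_comm]

theorem specAbsC_of_spectrum_eq_zero {n : Type*} [Fintype n] [DecidableEq n]
    {M : Matrix n n ℂ} (hM : spectrum ℂ M = {0}) : specAbsC M = 0 := by
  simp [specAbsC, hM]

theorem specAbsC_zero {n : Type*} [Fintype n] [DecidableEq n] [Nonempty n] :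
    specAbsC (0 : Matrix n n ℂ) = 0 :=
  specAbsC_of_spectrum_eq_zero spectrum.zero_eq

end Spectrum

section Classes

variable {N : ℕ} {B : Matrix (Fin N) (Fin N) ℂ}

theorem isClassChain_iff {l : List (Set (Fin N))} : IsClassChain B l ↔
    (∀ γ ∈ l, IsClass B γ) ∧ l.IsChain (fun γ δ => classAccess B γ δ ∧ γ ≠ δ) :=
  Iff.rfl

theorem le_of_access (hB : B.IsUpperTriangular) {i j : Fin N} (h : access B i j) : i ≤ j := by
  induction h with
  | refl => exact le_rfl
  | tail _ hstep ih => exact ih.trans (not_lt.1 fun hlt => hstep.2 (hB hlt))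

theorem classSet_eq_singleton (hB : B.IsUpperTriangular) (m : Fin N) :
    {n' : Fin N | access B m n' ∧ access B n' m} = {m} := by
  ext n'
  refine ⟨fun ⟨hmn, hnm⟩ => (le_antisymm (le_of_access hB hmn) (le_of_access hB hnm)).symm, ?_⟩
  rintro rfl
  exact ⟨.refl, .refl⟩

theorem isClass_iff_exists_singleton (hB : B.IsUpperTriangular) {γ : Set (Fin N)} :
    IsClass B γ ↔ ∃ m, γ = {m} := by
  simp only [IsClass, classSet_eq_singleton hB]

theorem classAccess_singleton_iff {a b : Fin N} : classAccess B {a} {b} ↔ access B a b := by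
  simp [classAccess]

theorem lt_of_classAccess_singleton (hB : B.IsUpperTriangular) {a b : Fin N}
    (h : classAccess B {a} {b}) (hne : ({a} : Set (Fin N)) ≠ {b}) : a < b :=
  (le_of_access hB (classAccess_singleton_iff.1 h)).lt_of_ne fun hab => hne (hab ▸ rfl)

theorem isBasic_singleton {k : Fin N} (hk : B k k = 0) (hB : specAbsC B = 0) : IsBasic B {k} := by
  have hsub : subMat B {k} = 0 := by
    ext ⟨a, rfl⟩ ⟨b, rfl⟩
    exact hk
  have : Nonempty ({k} : Set (Fin N)) := ⟨⟨k, rfl⟩⟩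
  rw [IsBasic, hB, hsub]
  -- `IsBasic` carries the subtype's `Fintype` instance, not `Set.fintypeSingleton`
  convert specAbsC_zero (n := ({k} : Set (Fin N)))

theorem chainLen_le_length (l : List (Set (Fin N))) : chainLen B l ≤ l.length :=
  List.countP_le_length

theorem chainLen_eq_length {l : List (Set (Fin N))} (h : ∀ γ ∈ l, IsBasic B γ) :
    chainLen B l = l.length :=
  List.countP_eq_length.2 fun γ hγ => decide_eq_true (h γ hγ)

end Classes

section Example

def Bmat (z : ℂ) : Matrix (Fin 4) (Fin 4) ℂ :=
  !![z, -1, 1, 0; 0, z, 0, -1; 0, 0, -z, 1; 0, 0, 0, z]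

theorem Amat_mul_Bmat (z : ℂ) : Amat z * Bmat z = z ^ 2 • 1 := by
  ext i j
  fin_cases i <;> fin_cases j <;> simp [Amat, Bmat, Matrix.mul_apply, Fin.sum_univ_four] <;> ring

theorem Matrix.inv_eq_inv_smul_of_mul_eq_smul_one {n K : Type*} [Fintype n] [DecidableEq n]
    [Field K] {A B : Matrix n n K} {c : K} (hc : c ≠ 0) (h : A * B = c • 1) :
    A⁻¹ = c⁻¹ • B :=
  Matrix.inv_eq_right_inv <| by rw [Matrix.mul_smul, h, smul_smul, inv_mul_cancel₀ hc, one_smul]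

theorem Amat_inv {z : ℂ} (hz : z ≠ 0) : (Amat z)⁻¹ = (z ^ 2)⁻¹ • Bmat z :=
  Matrix.inv_eq_inv_smul_of_mul_eq_smul_one (pow_ne_zero 2 hz) (Amat_mul_Bmat z)

theorem continuous_Bmat : Continuous Bmat := by
  unfold Bmat
  fun_prop

theorem Bmat_zero_ne_zero : Bmat 0 ≠ 0 := fun h => by
  simpa [Bmat] using congrFun (congrFun h 0) 1

theorem tendsto_sq_smul_Amat_inv :
    Tendsto (fun z : ℂ => z ^ 2 • (Amat z)⁻¹) (nhdsWithin 0 {(0 : ℂ)}ᶜ) (nhds (Bmat 0)) := by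
  refine (continuous_Bmat.tendsto 0).mono_left nhdsWithin_le_nhds |>.congr' ?_
  filter_upwards [self_mem_nhdsWithin] with z hz
  rw [Amat_inv hz, smul_smul, mul_inv_cancel₀ (pow_ne_zero 2 hz), one_smul]

theorem Amat_isUpperTriangular (z : ℂ) : (Amat z).IsUpperTriangular := by
  intro i j hij
  fin_cases i <;> fin_cases j <;> simp_all [Amat]

theorem specAbsC_Amat_zero : specAbsC (Amat 0) = 0 := by
  refine specAbsC_of_spectrum_eq_zero ?_
  rw [Matrix.spectrum_eq_range_diag_of_isUpperTriangular (Amat_isUpperTriangular 0)]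
  ext r
  simp [Amat, Fin.exists_fin_succ, eq_comm]

theorem not_access_Amat_zero_one_two : ¬ access (Amat 0) 1 2 := by
  intro h
  obtain h | ⟨c, ⟨-, hc⟩, hcto⟩ := Relation.ReflTransGen.cases_head h
  · exact absurd h (by decide)
  · -- the only edge out of `1` goes to `3`, which lies above `2`
    have : c = 3 := by fin_cases c <;> simp_all [Amat]
    exact absurd (le_of_access (Amat_isUpperTriangular 0) (this ▸ hcto)) (by decide)

theorem isClassChain_Amat_zero : IsClassChain (Amat 0) [{0}, {1}, {3}] := by
  have hA := Amat_isUpperTriangular 0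
  refine isClassChain_iff.2 ⟨fun γ hγ => ?_, ?_⟩
  · simp only [List.mem_cons, List.not_mem_nil, or_false] at hγ
    rcases hγ with rfl | rfl | rfl <;> exact (isClass_iff_exists_singleton hA).2 ⟨_, rfl⟩
  · simp only [List.isChain_cons_cons, List.isChain_singleton, and_true,
      classAccess_singleton_iff]
    refine ⟨⟨.single ⟨by decide, ?_⟩, ?_⟩, .single ⟨by decide, ?_⟩, ?_⟩ <;> simp [Amat]

theorem IsClassChain.length_le_three {l : List (Set (Fin 4))} (h : IsClassChain (Amat 0) l) :
    l.length ≤ 3 := by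
  have hA := Amat_isUpperTriangular 0
  obtain ⟨hcl, hch⟩ := isClassChain_iff.1 h
  rcases l with _ | ⟨γ₀, _ | ⟨γ₁, _ | ⟨γ₂, _ | ⟨γ₃, l⟩⟩⟩⟩
  any_goals simp
  obtain ⟨a, rfl⟩ := (isClass_iff_exists_singleton hA).1 (hcl γ₀ (by simp))
  obtain ⟨b, rfl⟩ := (isClass_iff_exists_singleton hA).1 (hcl γ₁ (by simp))
  obtain ⟨c, rfl⟩ := (isClass_iff_exists_singleton hA).1 (hcl γ₂ (by simp))
  obtain ⟨d, rfl⟩ := (isClass_iff_exists_singleton hA).1 (hcl γ₃ (by simp))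
  simp only [List.isChain_cons_cons] at hch
  obtain ⟨⟨hab, hab'⟩, ⟨hbc, hbc'⟩, ⟨hcd, hcd'⟩, -⟩ := hch
  have := lt_of_classAccess_singleton hA hab hab'
  have := lt_of_classAccess_singleton hA hbc hbc'
  have := lt_of_classAccess_singleton hA hcd hcd'
  obtain ⟨rfl, rfl⟩ : b = 1 ∧ c = 2 := by omega
  exact absurd (classAccess_singleton_iff.1 hbc) not_access_Amat_zero_one_two

end Example

/-- For `A(z) = [[z,1,1,0],[0,z,0,1],[0,0,−z,1],[0,0,0,z]]`, one has
`A(z)⁻¹ = z⁻² [[z,−1,1,0],[0,z,0,−1],[0,0,−z,1],[0,0,0,z]]` for `z ≠ 0`, so `z = 0` is a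
pole of order exactly `2` of `A(z)⁻¹`, even though the length of the longest chain of
classes of `A(0)` is `3`. -/
theorem example_matrix_pole_order_two_but_chain_three :
    (∀ z : ℂ, z ≠ 0 →
      (Amat z)⁻¹ = (z ^ 2)⁻¹ •
        !![z, -1, 1, 0; 0, z, 0, -1; 0, 0, -z, 1; 0, 0, 0, z]) ∧
    (∃ L : Matrix (Fin 4) (Fin 4) ℂ, L ≠ 0 ∧
      Tendsto (fun z : ℂ => z ^ 2 • (Amat z)⁻¹) (nhdsWithin 0 {(0 : ℂ)}ᶜ) (nhds L)) ∧
    IsGreatest {L : ℕ | ∃ l : List (Set (Fin 4)),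
      IsClassChain (Amat 0) l ∧ chainLen (Amat 0) l = L} 3 := by
  refine ⟨fun z hz => Amat_inv hz, ⟨Bmat 0, Bmat_zero_ne_zero, tendsto_sq_smul_Amat_inv⟩,
    ⟨[{0}, {1}, {3}], isClassChain_Amat_zero, chainLen_eq_length ?_⟩, ?_⟩
  · simp only [List.mem_cons, List.not_mem_nil, or_false]
    rintro γ (rfl | rfl | rfl) <;> exact isBasic_singleton (by simp [Amat]) specAbsC_Amat_zero
  · rintro _ ⟨l, hl, rfl⟩
    exact (chainLen_le_length l).trans hl.length_le_three
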